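/- Let 0 < α < 2, let u : ℝ → ℝ be a 2π-periodic C² function and let g : ℝ → ℝ be a 2π-periodic C¹ function. Then ∫_{−π}^{π} g(x) · Λ^α u(x) dx = (c_α/2) ∫_{−π}^{π} ∫_{−π}^{π} (g(x) − g(x−η)) (u(x) − u(x−η)) K_α(η) dη dx. -/

import Mathlib

open MeasureTheory Real

/-- The constant `c_σ = Γ(1+σ) cos((1−σ)π/2) / π`. -/
noncomputable def cFrac (σ : ℝ) : ℝ :=
  Real.Gamma (1 + σ) * Real.cos ((1 - σ) * Real.pi / 2) / Real.pi

/-- The periodized kernel `K_σ(η) = ∑_{k∈ℤ} |η + 2kπ|^{-(1+σ)}`. -/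
noncomputable def Kper (σ η : ℝ) : ℝ :=
  ∑' k : ℤ, |η + 2 * (k : ℝ) * Real.pi| ^ (-(1 + σ))

/-- The fractional Laplacian `Λ^σ f` of a `2π`-periodic function, defined by
`Λ^σ f(x) = (c_σ/2) ∫_{-π}^{π} (2f(x) − f(x+η) − f(x−η)) K_σ(η) dη`. -/
noncomputable def fracLap (σ : ℝ) (f : ℝ → ℝ) (x : ℝ) : ℝ :=
  (cFrac σ / 2) *
    ∫ η in (-Real.pi)..Real.pi, (2 * f x - f (x + η) - f (x - η)) * Kper σ η

/-!
Write `Δ_η u(x) = 2u(x) − u(x+η) − u(x−η)`. For fixed `η`, the substitution `x ↦ x − η`, harmless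
by periodicity, turns `∫ g(x) (u(x) − u(x+η)) dx` into `∫ g(x−η) (u(x−η) − u(x)) dx`, so that
`∫ g Δ_η u dx = ∫ (g(x) − g(x−η)) (u(x) − u(x−η)) dx`. It remains to integrate against
`K_α(η) dη` and swap the order of integration. Fubini applies because both integrands are
`O(η²)` uniformly in `x` (a second-difference bound for `u ∈ C²`, Lipschitz bounds for `g` and `u`),
and `η² K_α(η) ≤ |η|^(1−α) + C` is integrable on `[−π, π]` when `α < 2`.
-/

open Set Function

namespace Function.Periodic

variable {f : ℝ → ℝ} {c : ℝ}

theorem deriv (hf : Periodic f c) : Periodic (_root_.deriv f) c := fun x => by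
  rw [← deriv_comp_add_const, show (fun y => f (y + c)) = f from funext hf]

theorem exists_abs_le_of_continuous (hf : Periodic f c) (hc : c ≠ 0) (hcont : Continuous f) :
    ∃ M, ∀ x, |f x| ≤ M := by
  obtain ⟨M, hM⟩ := isBounded_iff_forall_norm_le.mp (hf.isBounded_of_continuous hc hcont)
  exact ⟨M, fun x => hM _ (mem_range_self x)⟩

theorem exists_lipschitzWith (hf : Periodic f c) (hc : c ≠ 0) (hdiff : ContDiff ℝ 1 f) :
    ∃ K, LipschitzWith K f := by
  obtain ⟨M, hM⟩ := hf.deriv.exists_abs_le_of_continuous hc (hdiff.continuous_deriv le_rfl)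
  refine ⟨M.toNNReal, lipschitzWith_of_nnnorm_deriv_le
    (hdiff.differentiable one_ne_zero) fun x => ?_⟩
  rw [← NNReal.coe_le_coe, coe_nnnorm, Real.coe_toNNReal']
  exact (hM x).trans (le_max_left _ _)

theorem intervalIntegral_comp_sub (hf : Periodic f c) (t η : ℝ) :
    ∫ x in t..t + c, f (x - η) = ∫ x in t..t + c, f x := by
  rw [intervalIntegral.integral_comp_sub_right, show t + c - η = t - η + c by ring,
    hf.intervalIntegral_add_eq]

theorem intervalIntegral_mul_two_mul_sub_sub {g u : ℝ → ℝ} {c : ℝ}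
    (hgp : Periodic g c) (hup : Periodic u c) (hg : Continuous g) (hu : Continuous u)
    (t η : ℝ) :
    ∫ x in t..t + c, g x * (2 * u x - u (x + η) - u (x - η))
      = ∫ x in t..t + c, (g x - g (x - η)) * (u x - u (x - η)) := by
  let h : ℝ → ℝ := fun x => g x * (u x - u (x + η))
  have hh : Periodic h c := fun x => by
    simp only [h, hgp x, add_right_comm x c η, hup (x + η), hup x]
  have hcont : Continuous h := by fun_prop
  calc ∫ x in t..t + c, g x * (2 * u x - u (x + η) - u (x - η))
      = ∫ x in t..t + c, ((g x - g (x - η)) * (u x - u (x - η)) + (h x - h (x - η))) :=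
        intervalIntegral.integral_congr fun x _ => by simp only [h, sub_add_cancel]; ring
    _ = (∫ x in t..t + c, (g x - g (x - η)) * (u x - u (x - η)))
          + ((∫ x in t..t + c, h x) - ∫ x in t..t + c, h (x - η)) := by
        rw [intervalIntegral.integral_add (Continuous.intervalIntegrable (by fun_prop) _ _)
            (Continuous.intervalIntegrable (by fun_prop) _ _),
          intervalIntegral.integral_sub (hcont.intervalIntegrable _ _)
            (Continuous.intervalIntegrable (by fun_prop) _ _)]
    _ = ∫ x in t..t + c, (g x - g (x - η)) * (u x - u (x - η)) := by
        rw [hh.intervalIntegral_comp_sub, sub_self, add_zero]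

end Function.Periodic

theorem abs_two_mul_sub_sub_le_of_lipschitzWith_deriv {f : ℝ → ℝ} {K : NNReal}
    (hf : Differentiable ℝ f) (hf' : LipschitzWith K (deriv f)) (x η : ℝ) :
    |2 * f x - f (x + η) - f (x - η)| ≤ 2 * K * η ^ 2 := by
  let φ : ℝ → ℝ := fun t => f (x + t) + f (x - t)
  have hφ : ∀ t, HasDerivAt φ (deriv f (x + t) - deriv f (x - t)) t := fun t => by
    have := ((hf (x + t)).hasDerivAt.comp_const_add x t).add
      ((hf (x - t)).hasDerivAt.comp_const_sub x t)
    rwa [← sub_eq_add_neg] at this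
  have hφ' : ∀ t ∈ Icc (-|η|) |η|, ‖deriv f (x + t) - deriv f (x - t)‖ ≤ 2 * K * |η| := by
    intro t ht
    have := hf'.dist_le_mul (x + t) (x - t)
    rw [Real.dist_eq, Real.dist_eq, show x + t - (x - t) = 2 * t by ring, abs_mul, abs_two] at this
    rw [Real.norm_eq_abs]
    nlinarith [abs_le.mpr ht, K.coe_nonneg]
  have := (convex_Icc (-|η|) |η|).norm_image_sub_le_of_norm_hasDerivWithin_le
    (fun t _ => (hφ t).hasDerivWithinAt) hφ' (x := 0) (y := η) (by simp) (abs_le.mp le_rfl)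
  simp only [φ, add_zero, sub_zero, Real.norm_eq_abs] at this
  calc |2 * f x - f (x + η) - f (x - η)| = |f (x + η) + f (x - η) - (f x + f x)| := by
        rw [← abs_neg]; ring_nf
    _ ≤ 2 * K * |η| * |η| := this
    _ = 2 * K * η ^ 2 := by rw [mul_assoc, abs_mul_abs_self, sq]

theorem LipschitzWith.abs_sub_sub_le {f : ℝ → ℝ} {K : NNReal} (hf : LipschitzWith K f)
    (x η : ℝ) : |f x - f (x - η)| ≤ K * |η| := by
  simpa [Real.dist_eq] using hf.dist_le_mul x (x - η)

theorem Kper_nonneg (σ η : ℝ) : 0 ≤ Kper σ η :=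
  tsum_nonneg fun _ => rpow_nonneg (abs_nonneg _) _

theorem measurable_Kper (σ : ℝ) : Measurable (Kper σ) :=
  Measurable.tsum fun _ => by fun_prop

theorem summable_Kper {σ : ℝ} (hσ : 0 < σ) (η : ℝ) :
    Summable fun k : ℤ => |η + 2 * (k : ℝ) * π| ^ (-(1 + σ)) := by
  have hs := ((summable_one_div_int_add_rpow (η / (2 * π)) (1 + σ)).mpr (by linarith)).mul_left
    ((2 * π) ^ (-(1 + σ)))
  refine hs.congr fun k => ?_
  -- `|η + 2kπ| = 2π |k + η / (2π)|`
  have h2π : 0 < 2 * π := two_pi_pos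
  rw [one_div, ← rpow_neg (abs_nonneg _), ← mul_rpow h2π.le (abs_nonneg _),
    ← abs_of_pos h2π, ← abs_mul, abs_of_pos h2π, mul_add, mul_div_cancel₀ _ h2π.ne']
  ring_nf

theorem rpow_abs_add_two_mul_pi_le {σ η : ℝ} (hσ : -1 ≤ σ) (hη : |η| ≤ π) (k : ℤ) :
    |η + 2 * (k : ℝ) * π| ^ (-(1 + σ))
      ≤ (if k = 0 then |η| ^ (-(1 + σ)) else 0) + π ^ (-(1 + σ)) * |(k : ℝ)| ^ (-(1 + σ)) := by
  have htail : 0 ≤ π ^ (-(1 + σ)) * |(k : ℝ)| ^ (-(1 + σ)) := by positivity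
  split_ifs with hk
  · subst hk
    simpa using htail
  have hk1 : (1 : ℝ) ≤ |(k : ℝ)| := by exact_mod_cast Int.one_le_abs hk
  have hfar : |(k : ℝ)| * π ≤ |η + 2 * (k : ℝ) * π| := by
    have := abs_sub_abs_le_abs_add (2 * (k : ℝ) * π) η
    rw [abs_mul, abs_mul, abs_two, abs_of_pos pi_pos, add_comm] at this
    nlinarith [pi_pos]
  rw [zero_add, ← mul_rpow pi_pos.le (abs_nonneg _), mul_comm π]
  exact rpow_le_rpow_of_nonpos (by positivity) hfar (by linarith)

theorem Kper_le {σ η : ℝ} (hσ : 0 < σ) (hη : |η| ≤ π) :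
    Kper σ η ≤ |η| ^ (-(1 + σ)) + π ^ (-(1 + σ)) * ∑' k : ℤ, |(k : ℝ)| ^ (-(1 + σ)) := by
  have hsum : Summable fun k : ℤ => |(k : ℝ)| ^ (-(1 + σ)) :=
    summable_abs_int_rpow (by linarith)
  calc Kper σ η
      ≤ ∑' k : ℤ, ((if k = 0 then |η| ^ (-(1 + σ)) else 0)
          + π ^ (-(1 + σ)) * |(k : ℝ)| ^ (-(1 + σ))) :=
        (summable_Kper hσ η).tsum_le_tsum (rpow_abs_add_two_mul_pi_le (by linarith) hη)
          ((summable_of_ne_finset_zero (s := {0}) (by simp_all)).add (hsum.mul_left _))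
    _ = _ := by
        rw [Summable.tsum_add (summable_of_ne_finset_zero (s := {0}) (by simp_all))
          (hsum.mul_left _), tsum_ite_eq, tsum_mul_left]

theorem intervalIntegrable_abs_rpow {r : ℝ} (hr : -1 < r) (a b : ℝ) :
    IntervalIntegrable (fun x => |x| ^ r) volume a b := by
  have hpos : ∀ c, 0 ≤ c → IntervalIntegrable (fun x => |x| ^ r) volume 0 c := fun c hc => by
    rw [intervalIntegrable_iff_integrableOn_Ioc_of_le hc]
    exact ((intervalIntegrable_iff_integrableOn_Ioc_of_le hc).mp
      (intervalIntegral.intervalIntegrable_rpow' hr)).congr_fun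
        (fun x hx => by rw [abs_of_pos hx.1]) measurableSet_Ioc
  have hall : ∀ c, IntervalIntegrable (fun x => |x| ^ r) volume 0 c := fun c => by
    rcases le_total 0 c with hc | hc
    · exact hpos c hc
    · rw [IntervalIntegrable.iff_comp_neg]
      simpa using hpos (-c) (by linarith)
  exact (hall a).symm.trans (hall b)

theorem sq_mul_abs_rpow_neg_le (η α : ℝ) :
    η ^ 2 * |η| ^ (-(1 + α)) ≤ |η| ^ (1 - α) := by
  rcases eq_or_ne η 0 with rfl | hη
  · simp only [ne_eq, OfNat.ofNat_ne_zero, not_false_eq_true, zero_pow, zero_mul]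
    positivity
  · rw [← sq_abs, ← rpow_natCast, ← rpow_add (abs_pos.mpr hη)]
    exact le_of_eq (by congr 1; push_cast; ring)

theorem integrableOn_sq_mul_Kper {α : ℝ} (hα0 : 0 < α) (hα2 : α < 2) :
    IntegrableOn (fun η => η ^ 2 * Kper α η) (Ioc (-π) π) := by
  set C := π ^ (-(1 + α)) * ∑' k : ℤ, |(k : ℝ)| ^ (-(1 + α))
  have hC : 0 ≤ C := mul_nonneg (by positivity) (tsum_nonneg fun _ => by positivity)
  have hdom : IntegrableOn (fun η => |η| ^ (1 - α) + π ^ 2 * C) (Ioc (-π) π) :=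
    (intervalIntegrable_iff_integrableOn_Ioc_of_le (by linarith [pi_pos])).mp
      ((intervalIntegrable_abs_rpow (by linarith) _ _).add intervalIntegrable_const)
  refine hdom.mono' ((measurable_id.pow_const 2).mul (measurable_Kper α)).aestronglyMeasurable ?_
  filter_upwards [ae_restrict_mem measurableSet_Ioc] with η hη
  have hηπ : |η| ≤ π := abs_le.mpr ⟨hη.1.le, hη.2⟩
  rw [Real.norm_eq_abs, abs_of_nonneg (mul_nonneg (sq_nonneg η) (Kper_nonneg α η))]
  calc η ^ 2 * Kper α η ≤ η ^ 2 * (|η| ^ (-(1 + α)) + C) :=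
        mul_le_mul_of_nonneg_left (Kper_le hα0 hηπ) (sq_nonneg η)
    _ = η ^ 2 * |η| ^ (-(1 + α)) + η ^ 2 * C := mul_add _ _ _
    _ ≤ |η| ^ (1 - α) + π ^ 2 * C :=
        add_le_add (sq_mul_abs_rpow_neg_le η α)
          (mul_le_mul_of_nonneg_right (sq_le_sq' hη.1.le hη.2) hC)

theorem integrable_mul_Kper_of_abs_le_mul_sq {α : ℝ} (hα0 : 0 < α) (hα2 : α < 2)
    {f : ℝ → ℝ → ℝ} (hf : Continuous (uncurry f)) {C : ℝ} (hC : ∀ x η, |f x η| ≤ C * η ^ 2) :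
    Integrable (uncurry fun x η => f x η * Kper α η)
      ((volume.restrict (Ioc (-π) π)).prod (volume.restrict (Ioc (-π) π))) := by
  have hdom : Integrable (fun p : ℝ × ℝ => (1 : ℝ) * (C * (p.2 ^ 2 * Kper α p.2)))
      ((volume.restrict (Ioc (-π) π)).prod (volume.restrict (Ioc (-π) π))) :=
    (integrableOn_const (C := (1 : ℝ)) measure_Ioc_lt_top.ne).mul_prod
      ((integrableOn_sq_mul_Kper hα0 hα2).const_mul C)
  refine hdom.mono'
    (hf.measurable.mul ((measurable_Kper α).comp measurable_snd)).aestronglyMeasurable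
    (ae_of_all _ fun p => ?_)
  rw [one_mul, ← mul_assoc]
  simp only [uncurry, norm_mul, Real.norm_eq_abs, abs_of_nonneg (Kper_nonneg α p.2)]
  exact mul_le_mul_of_nonneg_right (hC p.1 p.2) (Kper_nonneg α p.2)

theorem integral_integral_mul_Kper_congr {α : ℝ} (hα0 : 0 < α) (hα2 : α < 2)
    {f g : ℝ → ℝ → ℝ} (hf : Continuous (uncurry f)) (hg : Continuous (uncurry g)) {C D : ℝ}
    (hfC : ∀ x η, |f x η| ≤ C * η ^ 2) (hgD : ∀ x η, |g x η| ≤ D * η ^ 2)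
    (hfg : ∀ η, ∫ x in (-π)..π, f x η = ∫ x in (-π)..π, g x η) :
    ∫ x in (-π)..π, ∫ η in (-π)..π, f x η * Kper α η
      = ∫ x in (-π)..π, ∫ η in (-π)..π, g x η * Kper α η := by
  have hle : -π ≤ π := by linarith [pi_pos]
  simp only [intervalIntegral.integral_of_le hle] at hfg ⊢
  rw [integral_integral_swap (integrable_mul_Kper_of_abs_le_mul_sq hα0 hα2 hf hfC),
    integral_integral_swap (integrable_mul_Kper_of_abs_le_mul_sq hα0 hα2 hg hgD)]
  simp only [integral_mul_const, hfg]

theorem stmt11 (α : ℝ) (hα0 : 0 < α) (hα2 : α < 2)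
    (u : ℝ → ℝ) (hu : ContDiff ℝ 2 u) (huper : Function.Periodic u (2 * Real.pi))
    (g : ℝ → ℝ) (hg : ContDiff ℝ 1 g) (hgper : Function.Periodic g (2 * Real.pi)) :
    ∫ x in (-Real.pi)..Real.pi, g x * fracLap α u x
      = (cFrac α / 2) * ∫ x in (-Real.pi)..Real.pi, ∫ η in (-Real.pi)..Real.pi,
          (g x - g (x - η)) * (u x - u (x - η)) * Kper α η := by
  have h2π : 2 * π ≠ 0 := two_pi_pos.ne'
  obtain ⟨M, hM⟩ := hgper.exists_abs_le_of_continuous h2π hg.continuous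
  obtain ⟨Lg, hLg⟩ := hgper.exists_lipschitzWith h2π hg
  obtain ⟨Lu, hLu⟩ := huper.exists_lipschitzWith h2π (hu.of_le one_le_two)
  obtain ⟨Lu', hLu'⟩ := huper.deriv.exists_lipschitzWith h2π (hu.deriv' (n := 1))
  have hlap : ∀ x, g x * fracLap α u x
      = cFrac α / 2 * ∫ η in (-π)..π, g x * (2 * u x - u (x + η) - u (x - η)) * Kper α η :=
    fun x => by simp only [fracLap, mul_assoc (g x), intervalIntegral.integral_const_mul]; ring
  simp only [hlap, intervalIntegral.integral_const_mul]
  congr 1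
  refine integral_integral_mul_Kper_congr hα0 hα2 (by fun_prop) (by fun_prop)
    (C := M * (2 * Lu')) (D := Lg * Lu) (fun x η => ?_) (fun x η => ?_) (fun η => ?_)
  · rw [abs_mul, mul_assoc]
    exact mul_le_mul (hM x) (abs_two_mul_sub_sub_le_of_lipschitzWith_deriv
      (hu.differentiable two_ne_zero) hLu' x η) (abs_nonneg _) ((abs_nonneg _).trans (hM x))
  · rw [abs_mul, ← sq_abs, sq, mul_mul_mul_comm]
    exact mul_le_mul (hLg.abs_sub_sub_le x η) (hLu.abs_sub_sub_le x η) (abs_nonneg _)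
      (by positivity)
  · simpa only [show -π + 2 * π = π by ring] using
      hgper.intervalIntegral_mul_two_mul_sub_sub huper hg.continuous hu.continuous (-π) η
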